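/- Let G = (V, E_1, …, E_r) be an r-fold graph and W ⊆ V a subset that percolates in G. If for every vertex v ∈ V \ W and every colour i ∈ {1, …, r} there exists w ∈ W with {v, w} ∈ E_i, then G percolates. -/

import Mathlib

open MeasureTheory Filter

noncomputable section

namespace Jigsaw

variable {V : Type*} {r : ℕ}

/-- The auxiliary relation between clusters of the current partition `P`:
two distinct clusters of `P` are related if for every colour there is an edge of that
colour with one endpoint in each cluster. -/
def AuxRel (E : Fin r → Set (Sym2 V)) (P : Set (Set V)) (C C' : Set V) : Prop :=
  C ∈ P ∧ C' ∈ P ∧ C ≠ C' ∧ ∀ i : Fin r, ∃ u ∈ C, ∃ v ∈ C', s(u, v) ∈ E i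

/-- One step of the jigsaw process: merge the connected components of the auxiliary graph. -/
def nextPart (E : Fin r → Set (Sym2 V)) (P : Set (Set V)) : Set (Set V) :=
  {S | ∃ C ∈ P, S = ⋃₀ {C' | Relation.ReflTransGen (AuxRel E P) C C'}}

/-- The set `W` percolates: starting from singleton clusters of the vertices of `W`,
iterating the jigsaw process eventually yields the single cluster `W`. -/
def PercolatesOn (E : Fin r → Set (Sym2 V)) (W : Set V) : Prop :=
  ∃ t : ℕ, (nextPart E)^[t] {S | ∃ v ∈ W, S = {v}} = {W}

/-- The `r`-fold graph with edge sets `E` percolates. -/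
def Percolates (E : Fin r → Set (Sym2 V)) : Prop :=
  PercolatesOn E Set.univ

/-!
Running the process on `V` and on `W` side by side, refinement is preserved: a chain in the
auxiliary graph of a finer partition lifts to a chain of the coarser one. So once `W` has become
a single cluster, it lies inside one cluster `D` of the process on `V`. Every other cluster is
nonempty and disjoint from `D`, hence consists of vertices outside `W`, which the domination
hypothesis joins to `D` in every colour; one more step merges all clusters into `V`.
-/

open Relation Setoid

def componentUnion (E : Fin r → Set (Sym2 V)) (P : Set (Set V)) (C : Set V) : Set V :=
  ⋃₀ {C' | ReflTransGen (AuxRel E P) C C'}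

def Refines (P Q : Set (Set V)) : Prop :=
  ∀ C ∈ P, ∃ D ∈ Q, C ⊆ D

variable {E : Fin r → Set (Sym2 V)} {P Q : Set (Set V)} {C C' D : Set V}

lemma mem_nextPart {S : Set V} : S ∈ nextPart E P ↔ ∃ C ∈ P, S = componentUnion E P C :=
  Iff.rfl

lemma AuxRel.symm : AuxRel E P C C' → AuxRel E P C' C := by
  rintro ⟨hC, hC', hne, h⟩
  refine ⟨hC', hC, hne.symm, fun i => ?_⟩
  obtain ⟨u, hu, v, hv, he⟩ := h i
  exact ⟨v, hv, u, hu, Sym2.eq_swap ▸ he⟩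

instance : Std.Symm (AuxRel E P) := ⟨fun _ _ => AuxRel.symm⟩

lemma reflTransGen_auxRel_symm (h : ReflTransGen (AuxRel E P) C C') :
    ReflTransGen (AuxRel E P) C' C :=
  Std.Symm.symm _ _ h

lemma mem_of_reflTransGen_auxRel (hC : C ∈ P) (h : ReflTransGen (AuxRel E P) C C') :
    C' ∈ P := by
  induction h with
  | refl => exact hC
  | tail _ hstep _ => exact hstep.2.1

lemma subset_componentUnion_of_reflTransGen (h : ReflTransGen (AuxRel E P) C C') :
    C' ⊆ componentUnion E P C :=
  Set.subset_sUnion_of_mem h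

lemma componentUnion_eq_of_reflTransGen (h : ReflTransGen (AuxRel E P) C C') :
    componentUnion E P C = componentUnion E P C' := by
  ext x
  constructor
  · rintro ⟨A, hA, hx⟩
    exact ⟨A, (reflTransGen_auxRel_symm h).trans hA, hx⟩
  · rintro ⟨A, hA, hx⟩
    exact ⟨A, h.trans hA, hx⟩

lemma sUnion_nextPart : ⋃₀ nextPart E P = ⋃₀ P := by
  apply subset_antisymm
  · rintro x ⟨_, ⟨C, hC, rfl⟩, A, hA, hx⟩
    exact ⟨A, mem_of_reflTransGen_auxRel hC hA, hx⟩
  · rintro x ⟨C, hC, hx⟩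
    exact ⟨_, ⟨C, hC, rfl⟩, subset_componentUnion_of_reflTransGen ReflTransGen.refl hx⟩

lemma empty_notMem_nextPart (hP : ∅ ∉ P) : ∅ ∉ nextPart E P := by
  rintro ⟨C, hC, hempty⟩
  have hCe : C ⊆ ∅ := hempty ▸ subset_componentUnion_of_reflTransGen ReflTransGen.refl
  exact hP (Set.subset_empty_iff.1 hCe ▸ hC)

lemma pairwiseDisjoint_nextPart (hP : P.PairwiseDisjoint id) :
    (nextPart E P).PairwiseDisjoint id := by
  rintro _ ⟨C, hC, rfl⟩ _ ⟨C', hC', rfl⟩ hne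
  refine Set.disjoint_left.2 fun x ⟨A, hA, hxA⟩ ⟨B, hB, hxB⟩ => hne ?_
  have hAB : A = B := hP.elim (mem_of_reflTransGen_auxRel hC hA)
    (mem_of_reflTransGen_auxRel hC' hB) (Set.not_disjoint_iff.2 ⟨x, hxA, hxB⟩)
  subst hAB
  exact componentUnion_eq_of_reflTransGen (hA.trans (reflTransGen_auxRel_symm hB))

lemma isPartition_nextPart (hP : IsPartition P) : IsPartition (nextPart E P) := by
  refine (pairwiseDisjoint_nextPart hP.pairwiseDisjoint).isPartition_of_exists_of_ne_empty
    (fun v => ?_) (empty_notMem_nextPart hP.1)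
  have hv : v ∈ ⋃₀ nextPart E P := by
    rw [sUnion_nextPart, hP.sUnion_eq_univ]
    trivial
  exact Set.mem_sUnion.1 hv

lemma isPartition_iterate_nextPart (hP : IsPartition P) (t : ℕ) :
    IsPartition ((nextPart E)^[t] P) :=
  Function.Iterate.rec IsPartition hP (fun _ => isPartition_nextPart) t

lemma isPartition_singletons : IsPartition {S : Set V | ∃ v, S = {v}} := by
  refine Set.PairwiseDisjoint.isPartition_of_exists_of_ne_empty ?_
    (fun v => ⟨{v}, ⟨v, rfl⟩, rfl⟩) fun ⟨v, hv⟩ => Set.singleton_ne_empty v hv.symm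
  rintro _ ⟨v, rfl⟩ _ ⟨w, rfl⟩ hvw
  exact Set.disjoint_singleton.2 fun h => hvw (h ▸ rfl)

lemma Refines.exists_reflTransGen (h : Refines P Q) (hD : D ∈ Q) (hCD : C ⊆ D)
    (hchain : ReflTransGen (AuxRel E P) C C') :
    ∃ D' ∈ Q, C' ⊆ D' ∧ ReflTransGen (AuxRel E Q) D D' := by
  induction hchain with
  | refl => exact ⟨D, hD, hCD, ReflTransGen.refl⟩
  | tail _ hstep ih =>
    obtain ⟨Db, hDb, hbDb, hDDb⟩ := ih
    obtain ⟨Dc, hDc, hcDc⟩ := h _ hstep.2.1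
    by_cases hbc : Db = Dc
    · exact ⟨Dc, hDc, hcDc, hbc ▸ hDDb⟩
    refine ⟨Dc, hDc, hcDc, hDDb.tail ⟨hDb, hDc, hbc, fun i => ?_⟩⟩
    obtain ⟨u, hu, v, hv, he⟩ := hstep.2.2.2 i
    exact ⟨u, hbDb hu, v, hcDc hv, he⟩

lemma Refines.nextPart (h : Refines P Q) : Refines (nextPart E P) (nextPart E Q) := by
  rintro _ ⟨C, hC, rfl⟩
  obtain ⟨D, hD, hCD⟩ := h C hC
  refine ⟨componentUnion E Q D, ⟨D, hD, rfl⟩, ?_⟩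
  rintro x ⟨C', hC', hx⟩
  obtain ⟨D', -, hC'D', hDD'⟩ := h.exists_reflTransGen hD hCD hC'
  exact subset_componentUnion_of_reflTransGen hDD' (hC'D' hx)

lemma Refines.iterate_nextPart (h : Refines P Q) (t : ℕ) :
    Refines ((Jigsaw.nextPart E)^[t] P) ((Jigsaw.nextPart E)^[t] Q) := by
  induction t with
  | zero => exact h
  | succ t ih =>
    rw [Function.iterate_succ_apply', Function.iterate_succ_apply']
    exact ih.nextPart

lemma refines_singletons (W : Set V) :
    Refines {S | ∃ v ∈ W, S = {v}} {S | ∃ v : V, S = {v}} := by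
  rintro _ ⟨v, -, rfl⟩
  exact ⟨{v}, ⟨v, rfl⟩, subset_rfl⟩

lemma nextPart_eq_singleton_of_reflTransGen (hD : D ∈ P)
    (h : ∀ C ∈ P, ReflTransGen (AuxRel E P) D C) : nextPart E P = {⋃₀ P} := by
  have hD_all : componentUnion E P D = ⋃₀ P :=
    subset_antisymm (sUnion_nextPart (E := E) ▸ Set.subset_sUnion_of_mem ⟨D, hD, rfl⟩)
      (Set.sUnion_subset fun C hC => subset_componentUnion_of_reflTransGen (h C hC))
  ext S
  rw [mem_nextPart, Set.mem_singleton_iff]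
  constructor
  · rintro ⟨C, hC, rfl⟩
    rw [← componentUnion_eq_of_reflTransGen (h C hC), hD_all]
  · rintro rfl
    exact ⟨D, hD, hD_all.symm⟩

lemma auxRel_of_dominating {W : Set V}
    (hdom : ∀ v : V, v ∉ W → ∀ i : Fin r, ∃ w ∈ W, s(v, w) ∈ E i)
    (hD : D ∈ P) (hWD : W ⊆ D) (hC : C ∈ P) (hCD : C ≠ D) (hCne : C.Nonempty)
    (hdisj : Disjoint C D) : AuxRel E P D C := by
  obtain ⟨v, hv⟩ := hCne
  have hvW : v ∉ W := fun hvW => Set.disjoint_left.1 hdisj hv (hWD hvW)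
  refine AuxRel.symm ⟨hC, hD, hCD, fun i => ?_⟩
  obtain ⟨w, hwW, he⟩ := hdom v hvW i
  exact ⟨v, hv, w, hWD hwW, he⟩

lemma nextPart_eq_singleton_of_dominating {W : Set V}
    (hdom : ∀ v : V, v ∉ W → ∀ i : Fin r, ∃ w ∈ W, s(v, w) ∈ E i)
    (hP : IsPartition P) (hD : D ∈ P) (hWD : W ⊆ D) : nextPart E P = {Set.univ} := by
  rw [← hP.sUnion_eq_univ]
  refine nextPart_eq_singleton_of_reflTransGen hD fun C hC => ?_
  by_cases hCD : C = D
  · exact hCD ▸ ReflTransGen.refl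
  exact ReflTransGen.single (auxRel_of_dominating hdom hD hWD hC hCD
    (nonempty_of_mem_partition hP hC) (hP.pairwiseDisjoint hC hD hCD))

/-- If `W` percolates in the `r`-fold graph `G` and every vertex outside `W`
is joined to `W` by an edge of every colour, then `G` percolates. -/
theorem percolates_of_percolating_subset_dominating (n r : ℕ)
    (E : Fin r → Set (Sym2 (Fin n))) (W : Set (Fin n))
    (hW : PercolatesOn E W)
    (hdom : ∀ v : Fin n, v ∉ W → ∀ i : Fin r, ∃ w ∈ W, s(v, w) ∈ E i) :
    Percolates E := by
  obtain ⟨t, ht⟩ := hW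
  obtain ⟨D, hD, hWD⟩ := (refines_singletons W).iterate_nextPart (E := E) t W (ht ▸ rfl)
  refine ⟨t + 1, ?_⟩
  simp only [Set.mem_univ, true_and, Function.iterate_succ_apply']
  exact nextPart_eq_singleton_of_dominating hdom
    (isPartition_iterate_nextPart isPartition_singletons t) hD hWD

end Jigsaw
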